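/- Two Young functions ρ₁ and ρ₂ define equivalent Orlicz norms on a probability space (i.e., there exist constants c, C > 0 with c‖X‖_{ρ₁} ≤ ‖X‖_{ρ₂} ≤ C‖X‖_{ρ₁} for all random variables X on any probability space) if and only if ρ₁ and ρ₂ are equivalent, i.e., each dominates the other in the sense ρᵢ(x) ≤ C₁ρⱼ(C₂x) for all sufficiently large x. -/

import Mathlib

open Filter Topology MeasureTheory
open scoped ENNReal
noncomputable section

/-- A Young function: strictly increasing, convex on `[0,∞)`, vanishing at `0`. -/
def IsYoung (f : ℝ → ℝ) : Prop :=
  StrictMonoOn f (Set.Ici 0) ∧ ConvexOn ℝ (Set.Ici 0) f ∧ f 0 = 0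

/-- Legendre transform of a real function (sup over `y ≥ 0`), `ℝ≥0∞`-valued. -/
def Leg (f : ℝ → ℝ) (x : ℝ) : ℝ≥0∞ :=
  ⨆ y : {y : ℝ // 0 ≤ y}, ENNReal.ofReal (x * y - f y)

/-- Legendre transform of an `ℝ≥0∞`-valued function. -/
def LegE (f : ℝ → ℝ≥0∞) (x : ℝ) : ℝ≥0∞ :=
  ⨆ y : {y : ℝ // 0 ≤ y}, (ENNReal.ofReal (x * y) - f y)

/-- Monotone extension of a real function on `[0,∞)` to `ℝ≥0∞` arguments. -/
def extE (f : ℝ → ℝ) (t : ℝ≥0∞) : ℝ≥0∞ :=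
  ⨆ s : {s : ℝ // 0 ≤ s ∧ ENNReal.ofReal s ≤ t}, ENNReal.ofReal (f s)

/-- Monotone extension of an `ℝ≥0∞`-valued function to `ℝ≥0∞` arguments. -/
def extLT (f : ℝ → ℝ≥0∞) (t : ℝ≥0∞) : ℝ≥0∞ :=
  ⨆ s : {s : ℝ // 0 ≤ s ∧ ENNReal.ofReal s ≤ t}, f s

/-- Generalized (right-continuous) inverse of an `ℝ≥0∞`-valued function. -/
def invE (g : ℝ → ℝ≥0∞) (t : ℝ≥0∞) : ℝ≥0∞ :=
  ⨅ s : {s : ℝ // 0 ≤ s ∧ t ≤ g s}, ENNReal.ofReal s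

/-- `ρ(x) = sup_{y ≥ 0} (φ(xy) - ψ(y))/y`. -/
def rhoSup (φ ψ : ℝ → ℝ) (x : ℝ) : ℝ≥0∞ :=
  ⨆ y : {y : ℝ // 0 ≤ y}, ENNReal.ofReal ((φ (x * y) - ψ y) / y)

/-- `ζ(x) = sup_{y ≥ 0} (φ(xy) - ψ(y)/y)`. -/
def zetaSup (φ ψ : ℝ → ℝ) (x : ℝ) : ℝ≥0∞ :=
  ⨆ y : {y : ℝ // 0 ≤ y}, ENNReal.ofReal (φ (x * y) - ψ y / y)

/-- Domination order on real functions: `f(x) ≤ C₁ g(C₂ x)` for large `x`. -/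
def DominR (f g : ℝ → ℝ) : Prop :=
  ∃ C₁ C₂ x₀ : ℝ, 0 < C₁ ∧ 0 < C₂ ∧ 0 < x₀ ∧ ∀ x ≥ x₀, f x ≤ C₁ * g (C₂ * x)

/-- Equivalence of real functions: mutual domination. -/
def EquivR (f g : ℝ → ℝ) : Prop := DominR f g ∧ DominR g f

/-- Domination order on `ℝ≥0∞`-valued functions. -/
def DominE (f g : ℝ → ℝ≥0∞) : Prop :=
  ∃ C₁ C₂ x₀ : ℝ, 0 < C₁ ∧ 0 < C₂ ∧ 0 < x₀ ∧
    ∀ x ≥ x₀, f x ≤ ENNReal.ofReal C₁ * g (C₂ * x)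

/-- Equivalence of `ℝ≥0∞`-valued functions: mutual domination. -/
def EquivE (f g : ℝ → ℝ≥0∞) : Prop := DominE f g ∧ DominE g f

/-- The Orlicz norm associated to a Young function on a probability space. -/
def orliczNorm {Ω : Type} [MeasurableSpace Ω] (μ : Measure Ω)
    (ρ : ℝ → ℝ) (X : Ω → ℝ) : ℝ≥0∞ :=
  sInf {c : ℝ≥0∞ | ∃ C : ℝ, 0 < C ∧ c = ENNReal.ofReal C ∧
    ∫⁻ ω, ENNReal.ofReal (ρ (|X ω| / C)) ∂μ ≤ 1}

/-! Testing both norms on the indicator of an event of probability `1/t` shows that the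
Orlicz norm of that indicator is essentially `1/ρ⁻¹(t)`, so comparable norms force
comparable inverses `ρ₁⁻¹, ρ₂⁻¹` at every level `t ≥ 1`, which is domination. Conversely, if
`ρ₁(z) ≤ A (ρ₂(Bz) + 1)` for all `z ≥ 0` (domination, with `ρ₁` bounded below the threshold
absorbed into the `+ 1`), convexity gives
`ρ₁(z / 2AB) ≤ (ρ₂(z/B) + 1) / 2`, and integrating over a probability space turns
`E ρ₂(|X|/K) ≤ 1` into `E ρ₁(|X|/2ABK) ≤ 1`. -/

open ProbabilityTheory

namespace IsYoung

variable {ρ : ℝ → ℝ}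

lemma monotoneOn (hρ : IsYoung ρ) : MonotoneOn ρ (Set.Ici 0) := hρ.1.monotoneOn

lemma nonneg (hρ : IsYoung ρ) {x : ℝ} (hx : 0 ≤ x) : 0 ≤ ρ x :=
  hρ.2.2 ▸ hρ.monotoneOn Set.self_mem_Ici hx hx

lemma apply_mul_le (hρ : IsYoung ρ) {a y : ℝ} (ha₀ : 0 ≤ a) (ha₁ : a ≤ 1) (hy : 0 ≤ y) :
    ρ (a * y) ≤ a * ρ y := by
  simpa [hρ.2.2] using
    hρ.2.1.2 (Set.mem_Ici.2 hy) Set.self_mem_Ici ha₀ (sub_nonneg.2 ha₁) (by ring)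

lemma tendsto_atTop (hρ : IsYoung ρ) : Tendsto ρ atTop atTop := by
  have hρ₁ : 0 < ρ 1 := hρ.2.2 ▸ hρ.1 Set.self_mem_Ici (Set.mem_Ici.2 zero_le_one) one_pos
  refine tendsto_atTop_mono' atTop ?_ (tendsto_id.atTop_mul_const hρ₁)
  filter_upwards [eventually_ge_atTop 1] with y hy
  have hy₀ : 0 < y := one_pos.trans_le hy
  have h := hρ.apply_mul_le (inv_nonneg.2 hy₀.le) (inv_le_one_of_one_le₀ hy) hy₀.le
  rw [inv_mul_cancel₀ hy₀.ne'] at h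
  simpa [← le_div_iff₀' hy₀, div_eq_inv_mul] using h

end IsYoung

lemma dominR_of_eventually {f g : ℝ → ℝ} {C₁ C₂ : ℝ} (hC₁ : 0 < C₁) (hC₂ : 0 < C₂)
    (h : ∀ᶠ x in atTop, f x ≤ C₁ * g (C₂ * x)) : DominR f g := by
  obtain ⟨x₀, hx₀⟩ := eventually_atTop.1 h
  exact ⟨C₁, C₂, max x₀ 1, hC₁, hC₂, lt_max_of_lt_right one_pos,
    fun x hx => hx₀ x (le_of_max_le_left hx)⟩

lemma DominR.exists_le_mul_add_one {f g : ℝ → ℝ} (hf : IsYoung f) (hg : IsYoung g)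
    (h : DominR f g) : ∃ A B : ℝ, 1 ≤ A ∧ 0 < B ∧ ∀ z, 0 ≤ z → f z ≤ A * (g (B * z) + 1) := by
  obtain ⟨C₁, C₂, x₀, hC₁, hC₂, hx₀, hdom⟩ := h
  refine ⟨max 1 (max C₁ (f x₀)), C₂, le_max_left _ _, hC₂, fun z hz => ?_⟩
  have hg₀ : 0 ≤ g (C₂ * z) := hg.nonneg (by positivity)
  have hC₁A : C₁ ≤ max 1 (max C₁ (f x₀)) := le_max_of_le_right (le_max_left _ _)
  have hfA : f x₀ ≤ max 1 (max C₁ (f x₀)) := le_max_of_le_right (le_max_right _ _)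
  rcases le_or_gt x₀ z with hz₀ | hz₀
  · calc f z ≤ C₁ * g (C₂ * z) := hdom z hz₀
      _ ≤ _ := by nlinarith
  · calc f z ≤ f x₀ := hf.monotoneOn hz hx₀.le hz₀.le
      _ ≤ _ := by nlinarith

lemma ENNReal.ofReal_inv_mul_le_iff {M : ℝ} (hM : 0 < M) {a b : ℝ≥0∞} :
    ENNReal.ofReal M⁻¹ * a ≤ b ↔ a ≤ ENNReal.ofReal M * b := by
  rw [ENNReal.ofReal_inv_of_pos hM,
    ENNReal.inv_mul_le_iff (ENNReal.ofReal_pos.2 hM).ne' ENNReal.ofReal_ne_top]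

section OrliczNorm

variable {Ω : Type} [MeasurableSpace Ω] {μ : Measure Ω} {X : Ω → ℝ}

lemma orliczNorm_le_ofReal {ρ : ℝ → ℝ} {C : ℝ} (hC : 0 < C)
    (h : ∫⁻ ω, ENNReal.ofReal (ρ (|X ω| / C)) ∂μ ≤ 1) : orliczNorm μ ρ X ≤ ENNReal.ofReal C :=
  sInf_le ⟨C, hC, rfl, h⟩

lemma lintegral_le_one_of_orliczNorm_lt {ρ : ℝ → ℝ} (hρ : MonotoneOn ρ (Set.Ici 0)) {C : ℝ}
    (h : orliczNorm μ ρ X < ENNReal.ofReal C) :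
    ∫⁻ ω, ENNReal.ofReal (ρ (|X ω| / C)) ∂μ ≤ 1 := by
  obtain ⟨_, ⟨C', hC', rfl, hint⟩, hlt⟩ := sInf_lt_iff.1 h
  have hC'C : C' < C := (ENNReal.ofReal_lt_ofReal_iff_of_nonneg hC'.le).1 hlt
  have hC : 0 < C := hC'.trans hC'C
  refine le_trans (lintegral_mono fun ω => ENNReal.ofReal_le_ofReal ?_) hint
  exact hρ (Set.mem_Ici.2 (by positivity)) (Set.mem_Ici.2 (by positivity))
    (div_le_div_of_nonneg_left (abs_nonneg _) hC' hC'C.le)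

lemma orliczNorm_le_mul_of_lintegral_le_one {f g : ℝ → ℝ} {M : ℝ} (hM : 0 < M)
    (h : ∀ K, 0 < K → ∫⁻ ω, ENNReal.ofReal (g (|X ω| / K)) ∂μ ≤ 1 →
      ∫⁻ ω, ENNReal.ofReal (f (|X ω| / (M * K))) ∂μ ≤ 1) :
    orliczNorm μ f X ≤ ENNReal.ofReal M * orliczNorm μ g X := by
  rw [mul_comm, ← ENNReal.div_le_iff_le_mul (.inl (ENNReal.ofReal_pos.2 hM).ne')
    (.inl ENNReal.ofReal_ne_top)]
  refine le_sInf ?_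
  rintro _ ⟨K, hK, rfl, hint⟩
  refine ENNReal.div_le_of_le_mul ?_
  rw [← ENNReal.ofReal_mul hK.le, mul_comm]
  exact orliczNorm_le_ofReal (by positivity) (h K hK hint)

lemma lintegral_le_one_of_le_mul_add_one [IsProbabilityMeasure μ] {f g : ℝ → ℝ}
    (hf : IsYoung f) (hg : IsYoung g) {A B K : ℝ} (hA : 1 ≤ A) (hB : 0 < B) (hK : 0 < K)
    (hfg : ∀ z, 0 ≤ z → f z ≤ A * (g (B * z) + 1))
    (hint : ∫⁻ ω, ENNReal.ofReal (g (|X ω| / K)) ∂μ ≤ 1) :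
    ∫⁻ ω, ENNReal.ofReal (f (|X ω| / (2 * A * B * K))) ∂μ ≤ 1 := by
  have hA₀ : 0 < A := one_pos.trans_le hA
  have hpoint : ∀ ω, ENNReal.ofReal (f (|X ω| / (2 * A * B * K))) ≤
      2⁻¹ * ENNReal.ofReal (g (|X ω| / K)) + 2⁻¹ := by
    intro ω
    have hz : 0 ≤ |X ω| / (B * K) := by positivity
    have hconv := hf.apply_mul_le (inv_nonneg.2 (by positivity : (0:ℝ) ≤ 2 * A))
      (inv_le_one_of_one_le₀ (by linarith)) hz
    have hdom := hfg _ hz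
    rw [show (2 * A)⁻¹ * (|X ω| / (B * K)) = |X ω| / (2 * A * B * K) by field_simp] at hconv
    rw [show B * (|X ω| / (B * K)) = |X ω| / K by field_simp] at hdom
    have hg₀ : 0 ≤ g (|X ω| / K) := hg.nonneg (by positivity)
    calc ENNReal.ofReal (f (|X ω| / (2 * A * B * K)))
        ≤ ENNReal.ofReal (2⁻¹ * g (|X ω| / K) + 2⁻¹) := by
          refine ENNReal.ofReal_le_ofReal (hconv.trans ?_)
          calc (2 * A)⁻¹ * f (|X ω| / (B * K)) ≤ (2 * A)⁻¹ * (A * (g (|X ω| / K) + 1)) := by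
                gcongr
            _ = 2⁻¹ * g (|X ω| / K) + 2⁻¹ := by field_simp
      _ = 2⁻¹ * ENNReal.ofReal (g (|X ω| / K)) + 2⁻¹ := by
          rw [ENNReal.ofReal_add (by positivity) (by norm_num), ENNReal.ofReal_mul (by norm_num),
            ENNReal.ofReal_inv_of_pos two_pos, ENNReal.ofReal_ofNat]
  calc ∫⁻ ω, ENNReal.ofReal (f (|X ω| / (2 * A * B * K))) ∂μ
      ≤ ∫⁻ ω, (2⁻¹ * ENNReal.ofReal (g (|X ω| / K)) + 2⁻¹) ∂μ := lintegral_mono hpoint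
    _ = 2⁻¹ * ∫⁻ ω, ENNReal.ofReal (g (|X ω| / K)) ∂μ + 2⁻¹ := by
        rw [lintegral_add_right _ measurable_const, lintegral_const_mul' _ _ (by simp),
          lintegral_const, measure_univ, mul_one]
    _ ≤ 2⁻¹ * 1 + 2⁻¹ := by gcongr
    _ = 1 := by rw [mul_one, ENNReal.inv_two_add_inv_two]

end OrliczNorm

lemma lintegral_bernoulliMeasure_one_zero {ρ : ℝ → ℝ} (hρ : ρ 0 = 0) (p : unitInterval) (C : ℝ) :
    ∫⁻ ω, ENNReal.ofReal (ρ (|ω| / C)) ∂(bernoulliMeasure 1 0 p) = ENNReal.ofReal (p * ρ C⁻¹) := by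
  rw [bernoulliMeasure_def, lintegral_add_measure, lintegral_smul_measure, lintegral_smul_measure,
    lintegral_dirac, lintegral_dirac]
  simp only [abs_one, one_div, ENNReal.smul_def, smul_eq_mul, abs_zero, zero_div, hρ,
    ENNReal.ofReal_zero, smul_zero, add_zero, ENNReal.ofReal_mul p.2.1]
  rw [← ENNReal.ofReal_coe_nnreal, unitInterval.coe_toNNReal]

lemma dominR_of_orliczNorm_bernoulli_le {ρ₁ ρ₂ : ℝ → ℝ} (h₁ : IsYoung ρ₁) (h₂ : IsYoung ρ₂)
    {K : ℝ} (hK : 0 < K)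
    (h : ∀ p : unitInterval, orliczNorm (bernoulliMeasure 1 0 p) ρ₁ (fun ω => ω) ≤
      ENNReal.ofReal K * orliczNorm (bernoulliMeasure 1 0 p) ρ₂ (fun ω => ω)) :
    DominR ρ₁ ρ₂ := by
  refine dominR_of_eventually one_pos (by positivity : 0 < 2 * K) ?_
  have hlarge : ∀ᶠ x in atTop, 1 ≤ ρ₂ (2 * K * x) :=
    (h₂.tendsto_atTop.comp (tendsto_id.const_mul_atTop (by positivity))).eventually_ge_atTop 1
  filter_upwards [hlarge, eventually_gt_atTop 0] with x ht hx
  set t := ρ₂ (2 * K * x)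
  have ht₀ : 0 < t := one_pos.trans_le ht
  set p : unitInterval := ⟨t⁻¹, inv_nonneg.2 ht₀.le, inv_le_one_of_one_le₀ ht⟩
  have h₂norm : orliczNorm (bernoulliMeasure 1 0 p) ρ₂ (fun ω => ω) ≤
      ENNReal.ofReal (2 * K * x)⁻¹ := by
    refine orliczNorm_le_ofReal (by positivity) ?_
    rw [lintegral_bernoulliMeasure_one_zero h₂.2.2, inv_inv]
    show ENNReal.ofReal (t⁻¹ * t) ≤ 1
    rw [inv_mul_cancel₀ ht₀.ne', ENNReal.ofReal_one]
  have h₁norm : orliczNorm (bernoulliMeasure 1 0 p) ρ₁ (fun ω => ω) < ENNReal.ofReal x⁻¹ :=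
    calc orliczNorm (bernoulliMeasure 1 0 p) ρ₁ (fun ω => ω)
        ≤ ENNReal.ofReal K * ENNReal.ofReal (2 * K * x)⁻¹ := (h p).trans (by gcongr)
      _ = ENNReal.ofReal (2 * x)⁻¹ := by
          rw [← ENNReal.ofReal_mul hK.le]; congr 1; field_simp
      _ < ENNReal.ofReal x⁻¹ := by
          rw [ENNReal.ofReal_lt_ofReal_iff (by positivity)]; gcongr; linarith
  have := lintegral_le_one_of_orliczNorm_lt h₁.monotoneOn h₁norm
  rw [lintegral_bernoulliMeasure_one_zero h₁.2.2, inv_inv, ENNReal.ofReal_le_one] at this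
  rw [one_mul, ← div_le_one ht₀]
  simpa [p, inv_mul_eq_div] using this

lemma DominR.orliczNorm_le {f g : ℝ → ℝ} (hf : IsYoung f) (hg : IsYoung g) (h : DominR f g) :
    ∃ M : ℝ, 0 < M ∧ ∀ (Ω : Type) [MeasurableSpace Ω] (μ : Measure Ω) [IsProbabilityMeasure μ]
      (X : Ω → ℝ), orliczNorm μ f X ≤ ENNReal.ofReal M * orliczNorm μ g X := by
  obtain ⟨A, B, hA, hB, hfg⟩ := h.exists_le_mul_add_one hf hg
  have hA₀ : 0 < A := one_pos.trans_le hA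
  exact ⟨2 * A * B, by positivity, fun Ω _ μ _ X => orliczNorm_le_mul_of_lintegral_le_one
    (by positivity) fun K hK hint => lintegral_le_one_of_le_mul_add_one hf hg hA hB hK hfg hint⟩

/-- Two Young functions define (uniformly) equivalent Orlicz norms on all probability
spaces iff they are equivalent. -/
theorem stmt19 (ρ₁ ρ₂ : ℝ → ℝ) (h₁ : IsYoung ρ₁) (h₂ : IsYoung ρ₂) :
    (∃ c C : ℝ, 0 < c ∧ 0 < C ∧
      ∀ (Ω : Type) (_ : MeasurableSpace Ω) (μ : Measure Ω),
        IsProbabilityMeasure μ → ∀ X : Ω → ℝ,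
          ENNReal.ofReal c * orliczNorm μ ρ₁ X ≤ orliczNorm μ ρ₂ X ∧
          orliczNorm μ ρ₂ X ≤ ENNReal.ofReal C * orliczNorm μ ρ₁ X) ↔
    EquivR ρ₁ ρ₂ := by
  constructor
  · rintro ⟨c, C, hc, hC, H⟩
    refine ⟨dominR_of_orliczNorm_bernoulli_le h₁ h₂ (inv_pos.2 hc) fun p => ?_,
      dominR_of_orliczNorm_bernoulli_le h₂ h₁ hC fun p => (H ℝ _ _ inferInstance _).2⟩
    rw [← ENNReal.ofReal_inv_mul_le_iff (inv_pos.2 hc), inv_inv]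
    exact (H ℝ _ _ inferInstance _).1
  · rintro ⟨h₁₂, h₂₁⟩
    obtain ⟨M₁, hM₁, H₁⟩ := h₁₂.orliczNorm_le h₁ h₂
    obtain ⟨M₂, hM₂, H₂⟩ := h₂₁.orliczNorm_le h₂ h₁
    exact ⟨M₁⁻¹, M₂, inv_pos.2 hM₁, hM₂, fun Ω _ μ _ X =>
      ⟨(ENNReal.ofReal_inv_mul_le_iff hM₁).2 (H₁ Ω μ X), H₂ Ω μ X⟩⟩
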